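/- arXiv:2010.04939 — 2 statements merged into one kernel-verified Lean document; each statement's English description precedes it below -/
import Mathlib

section
/- Let B be a left semi-brace. Then for all a, b, c ∈ B one has (a∘b)·c = a·(b·c) + b·c + a·c. -/
/-- A left semi-brace: `(B,+)` is a left cancellative semigroup, `(B,*)` is a group
(whose identity `1` plays the role of `0` in the additive notation of the paper, and
`a⁻¹` plays the role of `a⁻`), and `a ∘ (b + c) = a ∘ b + a ∘ (a⁻ + c)` holds. -/
class LeftSemiBrace (B : Type*) extends Group B, Add B where
  add_assoc : ∀ a b c : B, a + b + c = a + (b + c)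
  add_left_cancel : ∀ a b c : B, a + b = a + c → b = c
  circ_add : ∀ a b c : B, a * (b + c) = a * b + a * (a⁻¹ + c)

namespace LeftSemiBrace

variable {B : Type*} [LeftSemiBrace B]

/-- The set `E` of additive idempotents. -/
def E (B : Type*) [LeftSemiBrace B] : Set B := {e | e + e = e}

/-- The set `G = B + 0`. -/
def G (B : Type*) [LeftSemiBrace B] : Set B := {x | ∃ b : B, x = b + 1}

/-- `λ_a (b) = a ∘ (a⁻ + b)`. -/
def lam (a b : B) : B := a * (a⁻¹ + b)

/-- `ρ_b (a) = (a⁻ + b)⁻ ∘ b`. -/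
def rho (b a : B) : B := (a⁻¹ + b)⁻¹ * b

/-- `a · b = λ_a(a⁻) + a ∘ b + λ_b(b⁻)`. -/
def dot (a b : B) : B := lam a a⁻¹ + a * b + lam b b⁻¹

/-- The group part `g_b = b + 0` of an element `b`. -/
def gp (b : B) : B := b + 1

/-- The additive inverse (within the group `(G,+)`) of the group part of an element:
for `g ∈ G` one has `neg g = -g`, since `-g_a = λ_a(a⁻) = a ∘ (a⁻ + a⁻)`. -/
def neg (a : B) : B := a * (a⁻¹ + a⁻¹)

/-- The idempotent part `e_b = -g_b + b` of an element `b`. -/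
def ep (b : B) : B := neg (gp b) + b

/-- `S` is a subsemigroup of `(B,+)`. -/
def IsAddSubsemigroup (S : Set B) : Prop := ∀ x ∈ S, ∀ y ∈ S, x + y ∈ S

/-- `S` is a subgroup of the multiplicative group `(B,∘)`. -/
def IsCircSubgroup (S : Set B) : Prop :=
  (1 : B) ∈ S ∧ (∀ x ∈ S, ∀ y ∈ S, x * y ∈ S) ∧ ∀ x ∈ S, x⁻¹ ∈ S

/-- `S` is a normal subgroup of the multiplicative group `(B,∘)`. -/
def IsCircNormal (S : Set B) : Prop :=
  IsCircSubgroup S ∧ ∀ x ∈ S, ∀ b : B, b * x * b⁻¹ ∈ S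

/-- `S` is a subgroup of the group `(G,+)`. -/
def IsAddSubgroupOfG (S : Set B) : Prop :=
  S ⊆ G B ∧ (1 : B) ∈ S ∧ (∀ x ∈ S, ∀ y ∈ S, x + y ∈ S) ∧ ∀ x ∈ S, neg x ∈ S

/-- `S` is a normal subgroup of the group `(G,+)`. -/
def IsAddNormalSubgroupOfG (S : Set B) : Prop :=
  IsAddSubgroupOfG S ∧ ∀ g ∈ G B, ∀ x ∈ S, g + x + neg g ∈ S

/-- `I` is an ideal of the left semi-brace `B` (Definition 17 of Catino–Colazzo–Stefanelli):
`I` is a subsemigroup of `(B,+)`, a normal subgroup of `(B,∘)`, `I ∩ G` is a normal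
subgroup of `(G,+)`, `ρ_b(n) ∈ I` for all `b ∈ B`, `n ∈ I ∩ G`, and `λ_g(e) ∈ I` for all
`g ∈ G`, `e ∈ I ∩ E`. -/
def IsIdeal (I : Set B) : Prop :=
  IsAddSubsemigroup I ∧ IsCircNormal I ∧ IsAddNormalSubgroupOfG (I ∩ G B) ∧
    (∀ b : B, ∀ n ∈ I ∩ G B, rho b n ∈ I) ∧
    (∀ g ∈ G B, ∀ e ∈ I ∩ E B, lam g e ∈ I)

/-- `I` is a left ideal of the left semi-brace `B`. -/
def IsLeftIdeal (I : Set B) : Prop :=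
  (∀ x ∈ I, x + 1 ∈ I) ∧ IsAddSubgroupOfG (I ∩ G B) ∧
    (∀ g ∈ G B, ∀ x ∈ I, lam g x ∈ I) ∧ IsCircSubgroup I

/-- The subgroup of `(G,+)` generated by a subset `S` of `G`. -/
def addClosure (S : Set B) : Set B :=
  ⋂₀ {T : Set B | S ⊆ T ∧ (1 : B) ∈ T ∧ (∀ x ∈ T, ∀ y ∈ T, x + y ∈ T) ∧ ∀ x ∈ T, neg x ∈ T}

/-- `X · Y`: the subgroup of `(G,+)` generated by `{x · y : x ∈ X, y ∈ Y}`. -/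
def dotSet (X Y : Set B) : Set B := addClosure {z | ∃ x ∈ X, ∃ y ∈ Y, z = dot x y}

/-- `S + E = {s + e : s ∈ S, e ∈ E}`. -/
def addE (S : Set B) : Set B := {z | ∃ s ∈ S, ∃ e ∈ E B, z = s + e}

/-- The right series of `B`: `rightSeries B n = B^(n+1)`, where `B^(1) = B` and
`B^(n+1) = B^(n) · B + E`. -/
def rightSeries (B : Type*) [LeftSemiBrace B] : ℕ → Set B
  | 0 => Set.univ
  | n + 1 => addE (dotSet (rightSeries B n) Set.univ)

/-- The left series of `B`: `leftSeries B n = B^(n+1)`, where `B^1 = B` and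
`B^(n+1) = B · B^n + E`. -/
def leftSeries (B : Type*) [LeftSemiBrace B] : ℕ → Set B
  | 0 => Set.univ
  | n + 1 => addE (dotSet Set.univ (leftSeries B n))

/-- The right series of the skew left brace `G`: `rightSeriesG B n = G^(n+1)`, where
`G^(1) = G` and `G^(n+1) = G^(n) · G`. -/
def rightSeriesG (B : Type*) [LeftSemiBrace B] : ℕ → Set B
  | 0 => G B
  | n + 1 => dotSet (rightSeriesG B n) (G B)

/-- The series `bracketSeries B n = B^[n+1]`, where `B^[1] = B` and `B^[n+1] = H_n + E`
with `H_n` the subgroup of `(G,+)` generated by `⋃_{i=1}^{n} B^[i] · B^[n+1-i]`. -/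
def bracketSeries (B : Type*) [LeftSemiBrace B] : ℕ → Set B
  | 0 => Set.univ
  | n + 1 =>
      addE (addClosure (⋃ i : Fin (n + 1),
        dotSet (bracketSeries B i.1) (bracketSeries B (n - i.1))))
  decreasing_by
  · exact i.isLt
  · exact Nat.lt_succ_of_le (Nat.sub_le n i.1)

/-- The socle `Soc(B) = {a ∈ B : ρ_a = ρ_0, λ_a = λ_0}`. -/
def Soc (B : Type*) [LeftSemiBrace B] : Set B :=
  {a | rho a = rho (1 : B) ∧ lam a = lam (1 : B)}

/-- The generalized socle `Zoc(B) = Soc(B) + E`. -/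
def Zoc (B : Type*) [LeftSemiBrace B] : Set B :=
  {z | ∃ a ∈ Soc B, ∃ e ∈ E B, z = a + e}

/-- The lower central series of the group `(G,+)`:  `γ_1 = G` and `γ_{n+1}` is the
subgroup of `(G,+)` generated by the additive commutators `-x - y + x + y` with
`x ∈ γ_n`, `y ∈ G`. -/
def lowerCentralSeriesG (B : Type*) [LeftSemiBrace B] : ℕ → Set B
  | 0 => G B
  | n + 1 => addClosure
      {z | ∃ x ∈ lowerCentralSeriesG B n, ∃ y ∈ G B, z = neg x + neg y + x + y}

/-- The group `(G,+)` is nilpotent. -/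
def IsNilpotentGAdd (B : Type*) [LeftSemiBrace B] : Prop :=
  ∃ n : ℕ, lowerCentralSeriesG B n = {(1 : B)}

lemma my_one_add (c : B) : (1 : B) + c = c := by
  have h := circ_add (1 : B) 1 c
  simp only [one_mul, inv_one] at h
  exact (add_left_cancel _ _ _ h).symm

lemma my_lam_one (c : B) : lam (1 : B) c = c := by
  simp [lam, my_one_add]

lemma my_mul_eq (a c : B) : a * c = a + lam a c := by
  have h := circ_add a 1 c
  rw [my_one_add, mul_one] at h
  exact h

lemma my_lam_add (a b c : B) : lam a (b + c) = lam a b + lam a c := by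
  unfold lam
  rw [← add_assoc]
  exact circ_add a (a⁻¹ + b) c

lemma my_lam_mul (a b c : B) : lam (a * b) c = lam a (lam b c) := by
  unfold lam
  rw [mul_inv_rev, mul_assoc]
  have h := circ_add b (b⁻¹ * a⁻¹) c
  rw [h]
  have : b * (b⁻¹ * a⁻¹) = a⁻¹ := by group
  rw [this]

lemma my_key (u v : B) : lam u (u⁻¹ * v) = lam u u⁻¹ + v := by
  rw [my_mul_eq u⁻¹ v]
  show u * (u⁻¹ + (u⁻¹ + lam u⁻¹ v)) = _
  rw [← add_assoc, circ_add u (u⁻¹ + u⁻¹) (lam u⁻¹ v)]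
  have : u * (u⁻¹ + lam u⁻¹ v) = lam u (lam u⁻¹ v) := rfl
  rw [this, ← my_lam_mul, mul_inv_cancel, my_lam_one]
  rfl

lemma my_lam_eq (u v : B) : lam u v = lam u u⁻¹ + u * v := by
  have h := my_key u (u * v)
  rw [inv_mul_cancel_left] at h
  exact h

lemma my_absorb (x z : B) : lam x x⁻¹ + (x + z) = z := by
  have hz : z = lam x (lam x⁻¹ z) := by
    rw [← my_lam_mul, mul_inv_cancel, my_lam_one]
  conv_lhs => rw [hz, ← my_mul_eq, ← my_lam_eq]
  exact hz.symm

lemma my_lam_neg (a b : B) : lam a (lam b b⁻¹) = lam (a * b) (a * b)⁻¹ + a := by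
  have h := my_key (a * b) a
  have h2 : (a * b)⁻¹ * a = b⁻¹ := by group
  rw [h2] at h
  rw [← h, my_lam_mul]

lemma my_dot_eq (a b : B) : dot a b = lam a b + lam b b⁻¹ := by
  unfold dot
  rw [my_lam_eq a b]

/-- for all `a, b, c ∈ B`, `(a∘b)·c = a·(b·c) + b·c + a·c`. -/
theorem circ_dot (a b c : B) :
    dot (a * b) c = dot a (dot b c) + dot b c + dot a c := by
  rw [my_dot_eq (a * b) c, my_lam_mul]
  rw [my_dot_eq a (dot b c), my_dot_eq a c]
  rw [my_dot_eq b c, my_lam_add, my_lam_neg a c]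
  -- RHS is now a sum of: lam a (lam b c), lam (a*c) (a*c)⁻¹, a,
  -- lam (lam b c + lam c c⁻¹) (lam b c + lam c c⁻¹)⁻¹, (lam b c + lam c c⁻¹),
  -- lam a c, lam c c⁻¹ — reassociate to the right and absorb.
  simp only [add_assoc]
  rw [← add_assoc (lam b c) (lam c c⁻¹) (lam a c + lam c c⁻¹)]
  rw [my_absorb (lam b c + lam c c⁻¹) (lam a c + lam c c⁻¹)]
  rw [← add_assoc a (lam a c) (lam c c⁻¹), ← my_mul_eq a c]
  rw [my_absorb (a * c) (lam c c⁻¹)]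

end LeftSemiBrace
end

section
/- Let B be a left semi-brace. Then a·b ∈ G for all a, b ∈ B. Moreover: (1) a·e = 0 for all a ∈ B and e ∈ E; (2) a·b = a·g_b for all a, b ∈ B; (3) a·b + b = λ_a(b) + e_b for all a, b ∈ B. -/
namespace LeftSemiBrace

variable {B : Type*} [LeftSemiBrace B]

/-!
Left distributivity with `b = 0` gives `a ∘ c = a + λ_a(c)`, and `λ_a` is additive; together
they yield `λ_a(a⁻) + a ∘ b = λ_a(b)`, so `a · b = λ_a(b) + λ_b(b⁻)` where `λ_b(b⁻) = -g_b ∈ G`.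
All four claims follow from this form, because `λ_a` maps idempotents to idempotents.
-/

section

variable (a b c x y : B) {e : B}

theorem one_add : (1 : B) + c = c := by
  have h := circ_add (1 : B) c c
  simp only [one_mul, inv_one] at h
  exact (add_left_cancel _ _ _ h).symm

theorem lam_add : lam a (x + y) = lam a x + lam a y := by
  simpa [lam, add_assoc] using circ_add a (a⁻¹ + x) y

theorem mul_eq_add_lam : a * c = a + lam a c := by
  simpa [one_add, lam] using circ_add a 1 c

theorem add_lam_inv : a + lam a a⁻¹ = 1 := by
  simpa using (mul_eq_add_lam a a⁻¹).symm

theorem lam_mul : lam (a * b) c = lam a (lam b c) := by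
  have h : b * (b⁻¹ * a⁻¹ + c) = a⁻¹ + lam b c := by
    simpa [lam, mul_assoc] using circ_add b (b⁻¹ * a⁻¹) c
  rw [lam, lam, ← h, mul_inv_rev, mul_assoc]

theorem lam_one_left : lam 1 x = x := by
  simp [lam, one_add]

theorem lam_lam_inv : lam a (lam a⁻¹ x) = x := by
  rw [← lam_mul, mul_inv_cancel, lam_one_left]

theorem lam_inv_add_self : lam a a⁻¹ + a = lam a 1 := by
  have h : a⁻¹ + lam a⁻¹ a = 1 := by rw [← mul_eq_add_lam, inv_mul_cancel]
  calc lam a a⁻¹ + a = lam a a⁻¹ + lam a (lam a⁻¹ a) := by rw [lam_lam_inv]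
    _ = lam a 1 := by rw [← lam_add, h]

theorem lam_inv_add_mul : lam a a⁻¹ + a * b = lam a b := by
  rw [mul_eq_add_lam, ← add_assoc, lam_inv_add_self, ← lam_add, one_add]

theorem lam_inv_add_one : lam a a⁻¹ + 1 = lam a a⁻¹ := by
  conv_lhs => rw [← lam_lam_inv a 1, ← lam_add, ← mul_eq_add_lam, mul_one]

theorem neg_eq_lam : neg a = lam a a⁻¹ := rfl

theorem neg_gp : neg (gp a) = lam a a⁻¹ := by
  apply add_left_cancel (gp a)
  rw [neg_eq_lam, add_lam_inv, gp, add_assoc, one_add, add_lam_inv]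

theorem dot_eq_lam_add_lam : dot a b = lam a b + lam b b⁻¹ := by
  rw [dot, lam_inv_add_mul]

variable {a b}

theorem add_eq_of_mem_E (he : e ∈ E B) : e + x = x :=
  add_left_cancel e _ _ (by rw [← add_assoc, he])

theorem lam_mem_E (he : e ∈ E B) : lam a e ∈ E B := by
  show lam a e + lam a e = lam a e
  rw [← lam_add, add_eq_of_mem_E _ he]

variable (a b)

theorem dot_add_one : dot a b + 1 = dot a b := by
  rw [dot_eq_lam_add_lam, add_assoc, lam_inv_add_one]

theorem dot_eq_one_of_mem_E (he : e ∈ E B) : dot a e = 1 := by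
  have h : lam e e⁻¹ = 1 := by simpa [add_eq_of_mem_E _ he] using add_lam_inv e
  rw [dot_eq_lam_add_lam, h, add_eq_of_mem_E _ (lam_mem_E he)]

theorem dot_gp : dot a (gp b) = dot a b := by
  rw [dot_eq_lam_add_lam, dot_eq_lam_add_lam, ← neg_eq_lam, neg_gp, gp, lam_add, add_assoc,
    add_eq_of_mem_E _ (lam_mem_E (one_add 1))]

theorem dot_add_self : dot a b + b = lam a b + ep b := by
  rw [dot_eq_lam_add_lam, ep, neg_gp, add_assoc]

end

/-- `a·b ∈ G` for all `a, b ∈ B`; moreover (1) `a·e = 0` for all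
`a ∈ B`, `e ∈ E`; (2) `a·b = a·g_b`; (3) `a·b + b = λ_a(b) + e_b`. -/
theorem dot_mem_G (B : Type*) [LeftSemiBrace B] :
    (∀ a b : B, dot a b ∈ G B) ∧
      (∀ a : B, ∀ e ∈ E B, dot a e = 1) ∧
      (∀ a b : B, dot a b = dot a (gp b)) ∧
      (∀ a b : B, dot a b + b = lam a b + ep b) :=
  ⟨fun a b => ⟨dot a b, (dot_add_one a b).symm⟩, fun a _ he => dot_eq_one_of_mem_E a he,
    fun a b => (dot_gp a b).symm, dot_add_self⟩

end LeftSemiBrace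
end
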